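/- For unit vectors x ∈ S² and a tangent vector p at x (p·x = 0) with p ≠ 0, the point m = x·(‖p‖² - 1)/(‖p‖² + 1) - p·2/(‖p‖² + 1) is a unit vector, and it satisfies 1 - x·m = 2/(‖p‖² + 1) > 0. -/

import Mathlib

/-!
Writing `t = ‖p‖²`, orthogonality of `x` and `p` gives `‖a • x - b • p‖² = a² + b² t`, and
`(t - 1)² + 4 t = (t + 1)²`. Geometrically, `p ↦ m` is an inverse stereographic projection
of the tangent plane at `x` onto the unit sphere.
-/

open scoped RealInnerProductSpace

section

variable {E : Type*} [NormedAddCommGroup E] [InnerProductSpace ℝ E]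

noncomputable def logCostMap (x p : E) : E :=
  ((‖p‖ ^ 2 - 1) / (‖p‖ ^ 2 + 1)) • x - (2 / (‖p‖ ^ 2 + 1)) • p

theorem norm_smul_sub_smul_sq_of_inner_eq_zero {x p : E} (hx : ‖x‖ = 1) (hpx : ⟪p, x⟫ = 0)
    (a b : ℝ) : ‖a • x - b • p‖ ^ 2 = a ^ 2 + b ^ 2 * ‖p‖ ^ 2 := by
  have horth : ⟪a • x, b • p⟫ = 0 := by
    rw [inner_smul_left, inner_smul_right, real_inner_comm, hpx]
    simp
  rw [sq, norm_sub_sq_eq_norm_sq_add_norm_sq_real horth, norm_smul, norm_smul, hx,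
    Real.norm_eq_abs, Real.norm_eq_abs, ← sq_abs a, ← sq_abs b]
  ring

theorem norm_logCostMap {x p : E} (hx : ‖x‖ = 1) (hpx : ⟪p, x⟫ = 0) :
    ‖logCostMap x p‖ = 1 := by
  have ht : 0 < ‖p‖ ^ 2 + 1 := by positivity
  have hsq : ‖logCostMap x p‖ ^ 2 = 1 := by
    rw [logCostMap, norm_smul_sub_smul_sq_of_inner_eq_zero hx hpx]
    field_simp
    ring
  exact (pow_eq_one_iff_of_nonneg (norm_nonneg _) two_ne_zero).mp hsq

theorem one_sub_inner_logCostMap {x p : E} (hx : ‖x‖ = 1) (hpx : ⟪p, x⟫ = 0) :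
    1 - ⟪x, logCostMap x p⟫ = 2 / (‖p‖ ^ 2 + 1) := by
  have ht : 0 < ‖p‖ ^ 2 + 1 := by positivity
  rw [logCostMap, inner_sub_right, inner_smul_right, inner_smul_right, real_inner_self_eq_norm_sq,
    hx, real_inner_comm, hpx]
  field_simp
  ring

end

theorem log_cost_map_unit_general (x p : EuclideanSpace ℝ (Fin 3))
    (hx : ‖x‖ = 1) (hpx : ⟪p, x⟫ = 0) :
    ‖((‖p‖ ^ 2 - 1) / (‖p‖ ^ 2 + 1)) • x - (2 / (‖p‖ ^ 2 + 1)) • p‖ = 1 ∧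
    1 - ⟪x, ((‖p‖ ^ 2 - 1) / (‖p‖ ^ 2 + 1)) • x - (2 / (‖p‖ ^ 2 + 1)) • p⟫
        = 2 / (‖p‖ ^ 2 + 1) ∧
    0 < 2 / (‖p‖ ^ 2 + 1) :=
  ⟨norm_logCostMap hx hpx, one_sub_inner_logCostMap hx hpx, by positivity⟩

/-- The reflector-antenna (logarithmic cost) optimal map formula on the sphere:
for unit `x` and nonzero tangent `p` at `x`, the point
`m = ((‖p‖²-1)/(‖p‖²+1)) x - (2/(‖p‖²+1)) p` is a unit vector with
`1 - x⬝m = 2/(‖p‖²+1) > 0`. -/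
theorem log_cost_map_unit (x p : EuclideanSpace ℝ (Fin 3))
    (hx : ‖x‖ = 1) (hpx : ⟪p, x⟫ = 0) (hp : p ≠ 0) :
    ‖((‖p‖ ^ 2 - 1) / (‖p‖ ^ 2 + 1)) • x - (2 / (‖p‖ ^ 2 + 1)) • p‖ = 1 ∧
    1 - ⟪x, ((‖p‖ ^ 2 - 1) / (‖p‖ ^ 2 + 1)) • x - (2 / (‖p‖ ^ 2 + 1)) • p⟫
        = 2 / (‖p‖ ^ 2 + 1) ∧
    0 < 2 / (‖p‖ ^ 2 + 1) :=
  log_cost_map_unit_general x p hx hpx
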